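/- Fix a real number β > -1 and a probability mass function (p_m)_{m≥1} on the positive integers such that Σ_{m≥1} p_m·C^m < ∞ for every C > 0. For k ≥ 1 and (x_1,...,x_k) ∈ [0,∞)^k set S_k(x) = Σ_{j=1}^{k} x_j·(j+β)/(2+β), and define h_0 = 1, h_k(x_1,...,x_k) = Σ_{m≥1} p_m·( S_k(x)^m − S_{k-1}(x)^m ), and f_k(x_1,...,x_k) = h_{k-1}(x_1,...,x_{k-1}) − h_k(x_1,...,x_k). Then for every k ≥ 1 the system of equations f_i(x_1,...,x_i) = x_i for i = 1,...,k has a unique solution (x_1*,...,x_k*) in [0,∞)^k, and every coordinate x_i* is strictly positive. -/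

import Mathlib

/-- `S_k(x) = Σ_{j=1}^{k} x_j (j+β)/(2+β)`. -/
noncomputable def Spart (β : ℝ) (x : ℕ → ℝ) (k : ℕ) : ℝ :=
  ∑ j ∈ Finset.Icc 1 k, x j * ((j : ℝ) + β) / (2 + β)

/-- `h_0 = 1` and `h_k(x) = Σ_m p_m (S_k(x)^m - S_{k-1}(x)^m)` for `k ≥ 1`. -/
noncomputable def hpart (β : ℝ) (p : ℕ → ℝ) (x : ℕ → ℝ) (k : ℕ) : ℝ :=
  if k = 0 then 1
  else ∑' m : ℕ, p m * ((Spart β x k) ^ m - (Spart β x (k - 1)) ^ m)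

/-- `f_k(x) = h_{k-1}(x) - h_k(x)` for `k ≥ 1`. -/
noncomputable def fpart (β : ℝ) (p : ℕ → ℝ) (x : ℕ → ℝ) (k : ℕ) : ℝ :=
  hpart β p x (k - 1) - hpart β p x k


/-!
With `G(s) = Σ_m p_m s^m`, the `i`-th equation reads `x_i + G(S_{i-1} + c_i x_i) = G(S_{i-1}) + h_{i-1}`
with `c_i = (i+β)/(2+β) > 0`, whose right-hand side involves only `x_1, …, x_{i-1}`. So the system is
triangular and is solved one coordinate at a time: the left-hand side is continuous and strictly
increasing in `x_i ≥ 0` and takes the value `G(S_{i-1})` at `x_i = 0`, so there is exactly one root, and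
it is positive because `h_{i-1} > 0` (`h_0 = 1`, and `G` is strictly increasing as `p` is not
concentrated at `0`).
-/

open Set

namespace MaxChoiceMori

noncomputable def genFun (p : ℕ → ℝ) (s : ℝ) : ℝ := ∑' m : ℕ, p m * s ^ m

section genFun

variable {p : ℕ → ℝ}

theorem summable_mul_pow (hpnn : ∀ m, 0 ≤ p m)
    (hexp : ∀ C : ℝ, 0 < C → Summable (fun m : ℕ => p m * C ^ m)) {s : ℝ} (hs : 0 ≤ s) :
    Summable (fun m : ℕ => p m * s ^ m) :=
  (hexp (s + 1) (by linarith)).of_nonneg_of_le (fun m => mul_nonneg (hpnn m) (pow_nonneg hs m))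
    fun m => mul_le_mul_of_nonneg_left (pow_le_pow_left₀ hs (by linarith) m) (hpnn m)

theorem genFun_monotoneOn (hpnn : ∀ m, 0 ≤ p m)
    (hexp : ∀ C : ℝ, 0 < C → Summable (fun m : ℕ => p m * C ^ m)) :
    MonotoneOn (genFun p) (Ici 0) := fun _ hs _ _ hst =>
  (summable_mul_pow hpnn hexp hs).tsum_le_tsum
    (fun m => mul_le_mul_of_nonneg_left (pow_le_pow_left₀ hs hst m) (hpnn m))
    (summable_mul_pow hpnn hexp (le_trans hs hst))

theorem genFun_strictMonoOn (hp0 : p 0 = 0) (hpnn : ∀ m, 0 ≤ p m)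
    (hpsum : (∑' m : ℕ, p m) = 1)
    (hexp : ∀ C : ℝ, 0 < C → Summable (fun m : ℕ => p m * C ^ m)) :
    StrictMonoOn (genFun p) (Ici 0) := by
  intro s hs t _ hst
  obtain ⟨m, hm⟩ : ∃ m, p m ≠ 0 := by
    by_contra! h
    simp [funext h] at hpsum
  have hm0 : m ≠ 0 := by rintro rfl; exact hm hp0
  exact Summable.tsum_lt_tsum
    (fun n => mul_le_mul_of_nonneg_left (pow_le_pow_left₀ hs hst.le n) (hpnn n))
    (mul_lt_mul_of_pos_left (pow_lt_pow_left₀ hst hs hm0) ((hpnn m).lt_of_ne' hm))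
    (summable_mul_pow hpnn hexp hs) (summable_mul_pow hpnn hexp (le_trans hs hst.le))

theorem continuousOn_genFun (hpnn : ∀ m, 0 ≤ p m)
    (hexp : ∀ C : ℝ, 0 < C → Summable (fun m : ℕ => p m * C ^ m)) {R : ℝ} (hR : 0 ≤ R) :
    ContinuousOn (genFun p) (Icc 0 R) := by
  refine continuousOn_tsum (fun m => (continuous_const.mul (continuous_pow m)).continuousOn)
    (summable_mul_pow hpnn hexp hR) fun m s hs => ?_
  rw [Real.norm_eq_abs, abs_mul, abs_of_nonneg (hpnn m), abs_pow, abs_of_nonneg hs.1]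
  exact mul_le_mul_of_nonneg_left (pow_le_pow_left₀ hs.1 hs.2 m) (hpnn m)

theorem injOn_add_genFun (hpnn : ∀ m, 0 ≤ p m)
    (hexp : ∀ C : ℝ, 0 < C → Summable (fun m : ℕ => p m * C ^ m)) {a c : ℝ} (ha : 0 ≤ a)
    (hc : 0 ≤ c) : InjOn (fun t => t + genFun p (a + t * c)) (Ici 0) := by
  refine (strictMonoOn_id.add_monotone fun s hs t _ hst => ?_).injOn
  exact genFun_monotoneOn hpnn hexp (by simp only [mem_Ici] at *; positivity)
    (by simp only [mem_Ici] at *; positivity) (by gcongr)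

theorem exists_pos_add_genFun_eq (hpnn : ∀ m, 0 ≤ p m)
    (hexp : ∀ C : ℝ, 0 < C → Summable (fun m : ℕ => p m * C ^ m)) {a c δ : ℝ} (ha : 0 ≤ a)
    (hc : 0 < c) (hδ : 0 < δ) : ∃ t, 0 < t ∧ t + genFun p (a + t * c) = genFun p a + δ := by
  set F : ℝ → ℝ := fun t => t + genFun p (a + t * c)
  have hF0 : F 0 = genFun p a := by simp [F]
  have hFδ : genFun p a + δ ≤ F δ := by
    have := genFun_monotoneOn hpnn hexp ha (show 0 ≤ a + δ * c by positivity)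
      (le_add_of_nonneg_right (by positivity))
    simp only [F]
    linarith
  have hcont : ContinuousOn F (Icc 0 δ) := by
    refine continuousOn_id.add ((continuousOn_genFun hpnn hexp
      (show 0 ≤ a + δ * c by positivity)).comp (by fun_prop) fun t ht => ?_)
    have := ht.1
    exact ⟨by positivity, by gcongr; exact ht.2⟩
  obtain ⟨t, ht, hFt⟩ := intermediate_value_Icc hδ.le hcont ⟨by linarith, hFδ⟩
  refine ⟨t, ht.1.lt_of_ne ?_, hFt⟩
  rintro rfl
  linarith

end genFun

section partialSums

variable {β : ℝ} {p : ℕ → ℝ}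

theorem Spart_succ (x : ℕ → ℝ) (k : ℕ) :
    Spart β x (k + 1) = Spart β x k + x (k + 1) * (((k : ℝ) + 1 + β) / (2 + β)) := by
  rw [Spart, Finset.sum_Icc_succ_top (by omega), ← Spart]
  push_cast
  ring

theorem succ_add_div_two_add_pos (hβ : -1 < β) (k : ℕ) : 0 < ((k : ℝ) + 1 + β) / (2 + β) :=
  div_pos (by linarith [k.cast_nonneg (α := ℝ)]) (by linarith)

theorem Spart_nonneg (hβ : -1 < β) {x : ℕ → ℝ} {k : ℕ}
    (hx : ∀ j, 1 ≤ j → j ≤ k → 0 ≤ x j) : 0 ≤ Spart β x k := by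
  refine Finset.sum_nonneg fun j hj => ?_
  rw [Finset.mem_Icc] at hj
  have : (1 : ℝ) ≤ j := by exact_mod_cast hj.1
  have : 0 < 2 + β := by linarith
  have := hx j hj.1 hj.2
  have : 0 < (j : ℝ) + β := by linarith
  positivity

theorem Spart_congr {x y : ℕ → ℝ} {k : ℕ} (h : ∀ j, 1 ≤ j → j ≤ k → x j = y j) :
    Spart β x k = Spart β y k :=
  Finset.sum_congr rfl fun j hj => by
    rw [Finset.mem_Icc] at hj
    rw [h j hj.1 hj.2]

theorem hpart_congr {x y : ℕ → ℝ} {k : ℕ} (h : ∀ j, 1 ≤ j → j ≤ k → x j = y j) :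
    hpart β p x k = hpart β p y k := by
  unfold hpart
  rw [Spart_congr h, Spart_congr fun j h1 h2 => h j h1 (by omega)]

theorem fpart_congr {x y : ℕ → ℝ} {k : ℕ} (h : ∀ j, 1 ≤ j → j ≤ k → x j = y j) :
    fpart β p x k = fpart β p y k := by
  unfold fpart
  rw [hpart_congr h, hpart_congr fun j h1 h2 => h j h1 (by omega)]

theorem hpart_succ (hβ : -1 < β) (hpnn : ∀ m, 0 ≤ p m)
    (hexp : ∀ C : ℝ, 0 < C → Summable (fun m : ℕ => p m * C ^ m)) {x : ℕ → ℝ} {k : ℕ}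
    (hx : ∀ j, 1 ≤ j → j ≤ k + 1 → 0 ≤ x j) :
    hpart β p x (k + 1) = genFun p (Spart β x (k + 1)) - genFun p (Spart β x k) := by
  simp only [hpart, genFun, add_tsub_cancel_right, Nat.add_one_ne_zero, if_false, mul_sub]
  exact (summable_mul_pow hpnn hexp (Spart_nonneg hβ hx)).tsum_sub
    (summable_mul_pow hpnn hexp (Spart_nonneg hβ fun j h1 h2 => hx j h1 (by omega)))

theorem hpart_pos (hβ : -1 < β) (hp0 : p 0 = 0) (hpnn : ∀ m, 0 ≤ p m)
    (hpsum : (∑' m : ℕ, p m) = 1)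
    (hexp : ∀ C : ℝ, 0 < C → Summable (fun m : ℕ => p m * C ^ m)) {x : ℕ → ℝ} :
    ∀ {k : ℕ}, (∀ j, 1 ≤ j → j ≤ k → 0 < x j) → 0 < hpart β p x k
  | 0, _ => by simp [hpart]
  | k + 1, hx => by
    rw [hpart_succ hβ hpnn hexp fun j h1 h2 => (hx j h1 h2).le, sub_pos, Spart_succ]
    have hS : 0 ≤ Spart β x k := Spart_nonneg hβ fun j h1 h2 => (hx j h1 (by omega)).le
    have hlt := lt_add_of_pos_right (Spart β x k)
      (mul_pos (hx (k + 1) (by omega) le_rfl) (succ_add_div_two_add_pos hβ k))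
    exact genFun_strictMonoOn hp0 hpnn hpsum hexp hS (hS.trans hlt.le) hlt

theorem fpart_succ_eq_self_iff (hβ : -1 < β) (hpnn : ∀ m, 0 ≤ p m)
    (hexp : ∀ C : ℝ, 0 < C → Summable (fun m : ℕ => p m * C ^ m)) {x : ℕ → ℝ} {k : ℕ}
    (hx : ∀ j, 1 ≤ j → j ≤ k + 1 → 0 ≤ x j) :
    fpart β p x (k + 1) = x (k + 1) ↔
      x (k + 1) + genFun p (Spart β x k + x (k + 1) * (((k : ℝ) + 1 + β) / (2 + β))) =
        genFun p (Spart β x k) + hpart β p x k := by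
  rw [fpart, add_tsub_cancel_right, hpart_succ hβ hpnn hexp hx, Spart_succ]
  constructor <;> intro h <;> linarith

theorem eq_of_fpart_eq_self (hβ : -1 < β) (hpnn : ∀ m, 0 ≤ p m)
    (hexp : ∀ C : ℝ, 0 < C → Summable (fun m : ℕ => p m * C ^ m)) {x y : ℕ → ℝ} :
    ∀ {k : ℕ}, (∀ i, 1 ≤ i → i ≤ k → 0 ≤ x i) → (∀ i, 1 ≤ i → i ≤ k → fpart β p x i = x i) →
      (∀ i, 1 ≤ i → i ≤ k → 0 ≤ y i) → (∀ i, 1 ≤ i → i ≤ k → fpart β p y i = y i) →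
      ∀ i, 1 ≤ i → i ≤ k → x i = y i
  | 0, _, _, _, _ => fun i h1 h2 => absurd (h1.trans h2) (by omega)
  | k + 1, hx, hfx, hy, hfy => by
    have hxy : ∀ i, 1 ≤ i → i ≤ k → x i = y i :=
      eq_of_fpart_eq_self hβ hpnn hexp (fun i h1 h2 => hx i h1 (by omega))
        (fun i h1 h2 => hfx i h1 (by omega)) (fun i h1 h2 => hy i h1 (by omega))
        (fun i h1 h2 => hfy i h1 (by omega))
    intro i h1 h2
    rcases Nat.le_succ_iff.1 h2 with h2 | rfl
    · exact hxy i h1 h2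
    have hxeq := (fpart_succ_eq_self_iff hβ hpnn hexp hx).1 (hfx _ h1 le_rfl)
    have hyeq := (fpart_succ_eq_self_iff hβ hpnn hexp hy).1 (hfy _ h1 le_rfl)
    rw [Spart_congr hxy, hpart_congr hxy] at hxeq
    exact injOn_add_genFun hpnn hexp (Spart_nonneg hβ fun j h1 h2 => hy j h1 (by omega))
      (succ_add_div_two_add_pos hβ k).le (hx _ h1 le_rfl) (hy _ h1 le_rfl) (hxeq.trans hyeq.symm)

theorem exists_pos_fpart_eq_self (hβ : -1 < β) (hp0 : p 0 = 0) (hpnn : ∀ m, 0 ≤ p m)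
    (hpsum : (∑' m : ℕ, p m) = 1)
    (hexp : ∀ C : ℝ, 0 < C → Summable (fun m : ℕ => p m * C ^ m)) :
    ∀ k : ℕ, ∃ x : ℕ → ℝ,
      (∀ i, 1 ≤ i → i ≤ k → 0 < x i) ∧ ∀ i, 1 ≤ i → i ≤ k → fpart β p x i = x i
  | 0 => ⟨0, fun i h1 h2 => absurd (h1.trans h2) (by omega),
      fun i h1 h2 => absurd (h1.trans h2) (by omega)⟩
  | k + 1 => by
    obtain ⟨x, hx, hfx⟩ := exists_pos_fpart_eq_self hβ hp0 hpnn hpsum hexp k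
    obtain ⟨t, ht, hteq⟩ := exists_pos_add_genFun_eq hpnn hexp
      (Spart_nonneg hβ fun j h1 h2 => (hx j h1 h2).le) (succ_add_div_two_add_pos hβ k)
      (hpart_pos hβ hp0 hpnn hpsum hexp hx)
    set x' := Function.update x (k + 1) t
    have hx'x : ∀ j, 1 ≤ j → j ≤ k → x' j = x j := fun j _ hj =>
      Function.update_of_ne (by omega) t x
    have hx't : x' (k + 1) = t := Function.update_self (k + 1) t x
    have hx' : ∀ i, 1 ≤ i → i ≤ k + 1 → 0 < x' i := fun i h1 h2 => by
      rcases Nat.le_succ_iff.1 h2 with h2 | rfl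
      · exact (hx'x i h1 h2).symm ▸ hx i h1 h2
      · exact hx't.symm ▸ ht
    refine ⟨x', hx', fun i h1 h2 => ?_⟩
    rcases Nat.le_succ_iff.1 h2 with h2 | rfl
    · rw [fpart_congr fun j hj1 hj2 => hx'x j hj1 (hj2.trans h2), hx'x i h1 h2]
      exact hfx i h1 h2
    · rw [fpart_succ_eq_self_iff hβ hpnn hexp fun j h1 h2 => (hx' j h1 h2).le, Spart_congr hx'x,
        hpart_congr hx'x, hx't]
      exact hteq

end partialSums

end MaxChoiceMori

open MaxChoiceMori in
/-- Section 5 of the paper: for every `k ≥ 1` the system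
`f_i(x_1,…,x_i) = x_i`, `i = 1,…,k`, has a unique solution in `[0,∞)^k`,
and all its coordinates are strictly positive. -/
theorem stmt16 (β : ℝ) (hβ : -1 < β)
    (p : ℕ → ℝ) (hp0 : p 0 = 0) (hpnn : ∀ m, 0 ≤ p m)
    (hpsum : (∑' m : ℕ, p m) = 1)
    (hexp : ∀ C : ℝ, 0 < C → Summable (fun m : ℕ => p m * C ^ m)) :
    ∀ k : ℕ, 1 ≤ k →
      ∃ xs : ℕ → ℝ,
        (∀ i : ℕ, 1 ≤ i → i ≤ k → 0 < xs i) ∧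
        (∀ i : ℕ, 1 ≤ i → i ≤ k → fpart β p xs i = xs i) ∧
        (∀ ys : ℕ → ℝ, (∀ i : ℕ, 1 ≤ i → i ≤ k → 0 ≤ ys i) →
          (∀ i : ℕ, 1 ≤ i → i ≤ k → fpart β p ys i = ys i) →
          ∀ i : ℕ, 1 ≤ i → i ≤ k → ys i = xs i) := by
  intro k _
  obtain ⟨xs, hpos, hfix⟩ := exists_pos_fpart_eq_self hβ hp0 hpnn hpsum hexp k
  exact ⟨xs, hpos, hfix, fun ys hys hfixy =>
    eq_of_fpart_eq_self hβ hpnn hexp hys hfixy (fun i h1 h2 => (hpos i h1 h2).le) hfix⟩
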